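/- arXiv:1004.4290 — 8 statements merged into one kernel-verified Lean document; each statement's English description precedes it below -/
import Mathlib

section
/- Let R be a unital ring, W an R-module and T : W → W an R-linear endomorphism. Then T is stable if and only if the restriction of T to its image, T|_{im T} : im T → im T, is bijective. -/
/-!
The inclusions `ker T ≤ ker T²` and `im T² ≤ im T` always hold. The reverse ones say exactly
that `T` restricted to `im T` is injective (no `T y ≠ 0` with `T (T y) = 0`) and surjective
(every `T y` is some `T (T z)`), so the two halves of stability match the two halves of
bijectivity separately; only the first needs subtraction.
-/

namespace LinearMap

section Semiring

variable {R W : Type*} [Semiring R] [AddCommMonoid W] [Module R W] (T : W →ₗ[R] W)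

theorem range_eq_range_comp_self_iff_surjective_restrict_range :
    range T = range (T ∘ₗ T) ↔
      Function.Surjective (T.restrict (p := range T) (q := range T)
        (fun x _ => mem_range_self T x)) := by
  constructor
  · rintro hrange ⟨x, hx⟩
    obtain ⟨z, hz⟩ : x ∈ range (T ∘ₗ T) := hrange ▸ hx
    exact ⟨⟨T z, mem_range_self T z⟩, Subtype.ext hz⟩
  · intro hsurj
    refine le_antisymm (fun x ⟨y, hy⟩ => ?_) (range_comp_le_range T T)
    obtain ⟨⟨_, z, rfl⟩, hz⟩ := hsurj ⟨T y, mem_range_self T y⟩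
    exact ⟨z, (congrArg Subtype.val hz).trans hy⟩

end Semiring

section Ring

variable {R W : Type*} [Ring R] [AddCommGroup W] [Module R W] (T : W →ₗ[R] W)

theorem ker_eq_ker_comp_self_iff_injective_restrict_range :
    ker T = ker (T ∘ₗ T) ↔
      Function.Injective (T.restrict (p := range T) (q := range T)
        (fun x _ => mem_range_self T x)) := by
  rw [injective_iff_map_eq_zero]
  constructor
  · rintro hker ⟨_, y, rfl⟩ hy
    have hy' : y ∈ ker (T ∘ₗ T) := congrArg Subtype.val hy
    rw [← hker] at hy'
    exact Subtype.ext hy'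
  · refine fun hinj => le_antisymm (ker_le_ker_comp T T) fun y hy => ?_
    exact congrArg Subtype.val (hinj ⟨T y, mem_range_self T y⟩ (Subtype.ext hy))

end Ring

end LinearMap

/-- Let `R` be a unital ring, `W` an `R`-module and `T : W → W` an
`R`-linear endomorphism.  Then `T` is stable (i.e. `ker T = ker T²` and `im T = im T²`)
if and only if the restriction of `T` to its image, `T|_{im T} : im T → im T`,
is bijective. -/
theorem stable_iff_bijective_restrict_range
    (R : Type*) [Ring R] (W : Type*) [AddCommGroup W] [Module R W]
    (T : W →ₗ[R] W) :
    (LinearMap.ker T = LinearMap.ker (T ∘ₗ T) ∧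
      LinearMap.range T = LinearMap.range (T ∘ₗ T)) ↔
    Function.Bijective
      (T.restrict (p := LinearMap.range T) (q := LinearMap.range T)
        (fun x _ => LinearMap.mem_range_self T x)) := by
  rw [T.ker_eq_ker_comp_self_iff_injective_restrict_range,
    T.range_eq_range_comp_self_iff_surjective_restrict_range]
  rfl
end

section
/- Let R be a unital ring, W an R-module and T : W → W an R-linear endomorphism. Then T is stable if and only if W is the internal direct sum of ker T and im T, that is, ker T ⊓ im T = 0 and ker T ⊔ im T = W. -/
/-! The reverse inclusions `ker T ≤ ker (T ∘ T)` and `range (T ∘ T) ≤ range T` always hold, and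
`ker (T ∘ T) = T⁻¹ (ker T)`, `range (T ∘ T) = T (range T)`. Through the Galois connection
`map T ⊣ comap T`, `ker (T ∘ T) ≤ ker T` becomes `T (T⁻¹ (ker T)) = range T ⊓ ker T ≤ ⊥`, and
`range T ≤ range (T ∘ T)` becomes `⊤ ≤ T⁻¹ (T (range T)) = range T ⊔ ker T`. -/

namespace LinearMap

theorem ker_eq_ker_comp_self_iff_disjoint {R M : Type*} [Semiring R] [AddCommMonoid M]
    [Module R M] (T : M →ₗ[R] M) :
    ker T = ker (T ∘ₗ T) ↔ Disjoint (ker T) (range T) := by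
  rw [← (ker_le_ker_comp T T).ge_iff_eq, ker_comp, ← Submodule.comap_bot,
    ← Submodule.map_le_iff_le_comap, Submodule.map_comap_eq, Submodule.comap_bot,
    ← disjoint_iff_inf_le, disjoint_comm]

theorem range_eq_range_comp_self_iff_codisjoint {R M : Type*} [Ring R] [AddCommGroup M]
    [Module R M] (T : M →ₗ[R] M) :
    range T = range (T ∘ₗ T) ↔ Codisjoint (ker T) (range T) := by
  rw [← (range_comp_le_range T T).ge_iff_eq', range_comp]
  nth_rw 1 [range_eq_map]
  rw [Submodule.map_le_iff_le_comap, Submodule.comap_map_eq, top_le_iff, sup_comm,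
    codisjoint_iff]

end LinearMap

/-- Let `R` be a unital ring, `W` an `R`-module and `T : W → W` an
`R`-linear endomorphism.  Then `T` is stable (i.e. `ker T = ker T²` and `im T = im T²`)
if and only if `W` is the internal direct sum of `ker T` and `im T`, i.e.
`ker T ⊓ im T = ⊥` and `ker T ⊔ im T = ⊤`. -/
theorem stable_iff_ker_sup_range
    (R : Type*) [Ring R] (W : Type*) [AddCommGroup W] [Module R W]
    (T : W →ₗ[R] W) :
    (LinearMap.ker T = LinearMap.ker (T ∘ₗ T) ∧
      LinearMap.range T = LinearMap.range (T ∘ₗ T)) ↔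
    (LinearMap.ker T ⊓ LinearMap.range T = ⊥ ∧
      LinearMap.ker T ⊔ LinearMap.range T = ⊤) := by
  rw [T.ker_eq_ker_comp_self_iff_disjoint, T.range_eq_range_comp_self_iff_codisjoint,
    disjoint_iff, codisjoint_iff]
end

section
/- Let R be a unital ring, W an R-module and T : W → W a stable R-linear endomorphism. Then the map P(T) → im T sending a sequence x to its zeroth term x 0 is a well-defined R-linear bijection onto im T. -/
/-! If `ker T = ker T²`, a compatible sequence vanishing at `0` vanishes everywhere: `x (k+2)`
is killed by `T²`, hence by `T`, i.e. `x (k+1) = 0`. If `im T = im T²`, then `T` maps `im T`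
onto itself, so every `w ∈ im T` starts a compatible sequence of successive preimages. -/

/-- The projective limit `P(T)` of the constant system
`⋯ → W --T--> W --T--> W`, realised as the submodule of `ℕ → W` consisting of the
sequences `x` with `T (x (k+1)) = x k` for all `k`. -/
def projLimit {R : Type*} [Ring R] {W : Type*} [AddCommGroup W] [Module R W]
    (T : W →ₗ[R] W) : Submodule R (ℕ → W) where
  carrier := {x | ∀ k, T (x (k + 1)) = x k}
  add_mem' := by
    intro a b ha hb k
    simp [map_add, ha k, hb k]
  zero_mem' := by intro k; simp
  smul_mem' := by
    intro c x hx k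
    simp [map_smul, hx k]

theorem Set.exists_preimage_chain_of_subset_image {α : Type*} {f : α → α} {S : Set α}
    (hS : S ⊆ f '' S) {w : α} (hw : w ∈ S) :
    ∃ x : ℕ → α, x 0 = w ∧ ∀ k, f (x (k + 1)) = x k := by
  have hlift : ∀ s : S, ∃ t : S, f t = s := fun s => by
    obtain ⟨t, ht, hts⟩ := hS s.2
    exact ⟨⟨t, ht⟩, hts⟩
  choose g hg using hlift
  refine ⟨fun k => (g^[k] ⟨w, hw⟩ : α), rfl, fun k => ?_⟩
  simp only [Function.iterate_succ_apply', hg]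

section projLimit

variable {R : Type*} [Ring R] {W : Type*} [AddCommGroup W] [Module R W] {T : W →ₗ[R] W}

variable (T) in
def projLimit.evalZero : projLimit T →ₗ[R] LinearMap.range T :=
  LinearMap.codRestrict (LinearMap.range T) ((LinearMap.proj 0).comp (projLimit T).subtype)
    fun x => ⟨(x : ℕ → W) 1, x.2 0⟩

theorem projLimit.eq_zero_of_apply_zero (hker : LinearMap.ker T = LinearMap.ker (T ∘ₗ T))
    {x : ℕ → W} (hx : x ∈ projLimit T) (h0 : x 0 = 0) : x = 0 := by
  funext k
  induction k with
  | zero => exact h0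
  | succ k ih =>
    rw [Pi.zero_apply] at ih ⊢
    have hsq : x (k + 2) ∈ LinearMap.ker (T ∘ₗ T) := by
      rw [LinearMap.mem_ker, LinearMap.comp_apply, hx (k + 1), hx k, ih]
    rwa [← hker, LinearMap.mem_ker, hx (k + 1)] at hsq

theorem projLimit.evalZero_injective (hker : LinearMap.ker T = LinearMap.ker (T ∘ₗ T)) :
    Function.Injective (projLimit.evalZero T) := by
  rw [← LinearMap.ker_eq_bot, LinearMap.ker_eq_bot']
  intro x hx
  exact Subtype.ext (eq_zero_of_apply_zero hker x.2 (congrArg Subtype.val hx))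

theorem projLimit.evalZero_surjective (hrange : LinearMap.range T = LinearMap.range (T ∘ₗ T)) :
    Function.Surjective (projLimit.evalZero T) := by
  have hself : (LinearMap.range T : Set W) ⊆ T '' LinearMap.range T := by
    intro w hw
    rwa [hrange, LinearMap.range_comp, Submodule.map_coe] at hw
  rintro ⟨w, hw⟩
  obtain ⟨x, hx0, hx⟩ := Set.exists_preimage_chain_of_subset_image hself hw
  exact ⟨⟨x, hx⟩, Subtype.ext hx0⟩

end projLimit

/-- Let `R` be a unital ring, `W` an `R`-module and `T : W → W` a
stable `R`-linear endomorphism.  Then the map `P(T) → im T` sending a sequence `x` to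
its zeroth term `x 0` is a well-defined `R`-linear bijection onto `im T`. -/
theorem projLimit_equiv_range_of_stable
    (R : Type*) [Ring R] (W : Type*) [AddCommGroup W] [Module R W]
    (T : W →ₗ[R] W)
    (hker : LinearMap.ker T = LinearMap.ker (T ∘ₗ T))
    (hrange : LinearMap.range T = LinearMap.range (T ∘ₗ T)) :
    ∃ e : projLimit T ≃ₗ[R] LinearMap.range T,
      ∀ x : projLimit T, (e x : W) = (x : ℕ → W) 0 :=
  ⟨LinearEquiv.ofBijective (projLimit.evalZero T)
      ⟨projLimit.evalZero_injective hker, projLimit.evalZero_surjective hrange⟩,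
    fun _ => rfl⟩
end

section
/- Let R be a unital ring, W an R-module and T : W → W a stable R-linear endomorphism. Then the composite of the inclusion im T ↪ W with the zeroth structure map ι₀ : W → C(T) into the inductive limit is an R-linear bijection from im T onto C(T). -/
/-- The direct system `W --T--> W --T--> W → ⋯` indexed by `ℕ` associated to an
`R`-linear endomorphism `T`: the structure map from stage `i` to stage `j ≥ i` is
`T^(j-i)`. -/
def indSys {R : Type*} [Ring R] {W : Type*} [AddCommGroup W] [Module R W]
    (T : Module.End R W) : ∀ i j : ℕ, i ≤ j → (W →ₗ[R] W) :=
  fun i j _ => T ^ (j - i)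

/-- The inductive limit `C(T)` of the direct system `W --T--> W --T--> W → ⋯`,
taken in the category of `R`-modules. -/
abbrev indLimit (R : Type*) [Ring R] {W : Type*} [AddCommGroup W] [Module R W]
    (T : Module.End R W) : Type _ :=
  Module.DirectLimit (fun _ : ℕ => W) (indSys T)

/-- The structure map `ι_k : W → C(T)`; it satisfies `ι_{k+1} ∘ T = ι_k`. -/
noncomputable def indLimit.ι (R : Type*) [Ring R] {W : Type*} [AddCommGroup W]
    [Module R W] (T : Module.End R W) (k : ℕ) : W →ₗ[R] indLimit R T :=
  Module.DirectLimit.of R ℕ (fun _ : ℕ => W) (indSys T) k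

instance indSys.directedSystem {R : Type*} [Ring R] {W : Type*} [AddCommGroup W]
    [Module R W] (T : Module.End R W) :
    DirectedSystem (fun _ : ℕ => W) (fun i j h => indSys T i j h) where
  map_self := by intro i x; simp [indSys]
  map_map := by
    intro k j i hij hjk x
    show (T ^ (k - j)) ((T ^ (j - i)) x) = (T ^ (k - i)) x
    rw [← Module.End.mul_apply, ← pow_add]
    congr 2
    omega

theorem ker_pow_of_stable {R : Type*} [Ring R] {W : Type*} [AddCommGroup W]
    [Module R W] (T : Module.End R W)
    (hker : LinearMap.ker T = LinearMap.ker (T ∘ₗ T)) (n : ℕ) :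
    LinearMap.ker (T ^ (n + 1)) = LinearMap.ker T := by
  induction n with
  | zero => simp
  | succ n ih =>
    ext x
    simp only [LinearMap.mem_ker]
    constructor
    · intro h
      have h1 : (T ^ (n + 1)) (T x) = 0 := by
        rw [← Module.End.mul_apply, ← pow_succ]; exact h
      have h2 : T x ∈ LinearMap.ker T := ih ▸ LinearMap.mem_ker.mpr h1
      have h3 : x ∈ LinearMap.ker (T ∘ₗ T) := by
        simpa [LinearMap.mem_ker] using h2
      rw [← hker] at h3
      exact h3
    · intro h
      have : (T ^ (n + 2)) x = (T ^ (n + 1)) (T x) := by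
        rw [← Module.End.mul_apply, ← pow_succ]
      rw [this, h, map_zero]

theorem range_pow_of_stable {R : Type*} [Ring R] {W : Type*} [AddCommGroup W]
    [Module R W] (T : Module.End R W)
    (hrange : LinearMap.range T = LinearMap.range (T ∘ₗ T)) (n : ℕ) :
    LinearMap.range (T ^ (n + 1)) = LinearMap.range T := by
  induction n with
  | zero => simp
  | succ n ih =>
    ext y
    simp only [LinearMap.mem_range]
    constructor
    · rintro ⟨x, rfl⟩
      exact ⟨(T ^ (n + 1)) x, by rw [← Module.End.mul_apply, ← pow_succ']⟩
    · rintro ⟨x, rfl⟩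
      have hx : T x ∈ LinearMap.range (T ∘ₗ T) := hrange ▸ LinearMap.mem_range_self T x
      obtain ⟨w, hw⟩ := hx
      have hTw : T w ∈ LinearMap.range (T ^ (n + 1)) := ih ▸ LinearMap.mem_range_self T w
      obtain ⟨u, hu⟩ := hTw
      refine ⟨u, ?_⟩
      have : (T ^ (n + 2)) u = T ((T ^ (n + 1)) u) := by
        rw [← Module.End.mul_apply, ← pow_succ']
      rw [this, hu]
      simpa [LinearMap.comp_apply] using hw

/-- Let `R` be a unital ring, `W` an `R`-module and `T : W → W` a
stable `R`-linear endomorphism.  Then the composite of the inclusion `im T ↪ W` with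
the zeroth structure map `ι₀ : W → C(T)` into the inductive limit is an `R`-linear
bijection from `im T` onto `C(T)`. -/
theorem range_equiv_indLimit_of_stable
    (R : Type*) [Ring R] (W : Type*) [AddCommGroup W] [Module R W]
    (T : Module.End R W)
    (hker : LinearMap.ker T = LinearMap.ker (T ∘ₗ T))
    (hrange : LinearMap.range T = LinearMap.range (T ∘ₗ T)) :
    Function.Bijective
      ((indLimit.ι R T 0).comp (LinearMap.range T).subtype) := by
  constructor
  · rw [← LinearMap.ker_eq_bot]
    rw [Submodule.eq_bot_iff]
    rintro ⟨x, y, rfl⟩ hx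
    simp only [LinearMap.mem_ker, LinearMap.comp_apply, Submodule.coe_subtype] at hx
    obtain ⟨j, hij, hj⟩ := Module.DirectLimit.of.zero_exact hx
    have hj' : (T ^ j) (T y) = 0 := by
      simpa [indSys] using hj
    have : (T ^ (j + 1)) y = 0 := by
      rw [pow_succ, Module.End.mul_apply]; exact hj'
    have hy : T y = 0 := by
      have := (ker_pow_of_stable T hker j) ▸ LinearMap.mem_ker.mpr this
      exact LinearMap.mem_ker.mp this
    simp [hy]
  · intro z
    obtain ⟨k, w, rfl⟩ := Module.DirectLimit.exists_of z
    have hTw : T w ∈ LinearMap.range (T ^ (k + 2)) :=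
      (range_pow_of_stable T hrange (k + 1)) ▸ LinearMap.mem_range_self T w
    obtain ⟨y, hy⟩ := hTw
    refine ⟨⟨T y, LinearMap.mem_range_self T y⟩, ?_⟩
    simp only [LinearMap.comp_apply, Submodule.coe_subtype, indLimit.ι]
    have h1 : Module.DirectLimit.of R ℕ (fun _ : ℕ => W) (indSys T) 0 (T y)
        = Module.DirectLimit.of R ℕ (fun _ : ℕ => W) (indSys T) (k + 1)
          (indSys T 0 (k + 1) (Nat.zero_le _) (T y)) :=
      (Module.DirectLimit.of_f).symm
    have h2 : indSys T 0 (k + 1) (Nat.zero_le _) (T y) = T w := by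
      show (T ^ (k + 1 - 0)) (T y) = T w
      rw [Nat.sub_zero, ← Module.End.mul_apply, ← pow_succ, hy]
    rw [h1, h2]
    have h3 : indSys T k (k + 1) (Nat.le_succ k) w = T w := by simp [indSys]
    calc Module.DirectLimit.of R ℕ (fun _ : ℕ => W) (indSys T) (k + 1) (T w)
        = Module.DirectLimit.of R ℕ (fun _ : ℕ => W) (indSys T) (k + 1)
            (indSys T k (k + 1) (Nat.le_succ k) w) := by rw [h3]
      _ = Module.DirectLimit.of R ℕ (fun _ : ℕ => W) (indSys T) k w :=
          Module.DirectLimit.of_f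
end

section
/- Let R be a unital ring, W an R-module and T : W → W an R-linear endomorphism such that Tⁿ is stable for some n ≥ 1. Then the canonical R-linear map from the projective limit P(T) to the inductive limit C(T), sending a sequence x to ι₀(x 0), is bijective. -/
instance dirSysIndSys {R : Type*} [Ring R] {W : Type*} [AddCommGroup W] [Module R W]
    (T : Module.End R W) :
    DirectedSystem (fun _ : ℕ => W) (fun i j h => indSys T i j h) where
  map_self := fun i x => by simp [indSys]
  map_map := fun k j i hij hjk x => by
    simp only [indSys]
    rw [← Module.End.mul_apply, ← pow_add]
    have h : k - j + (j - i) = k - i := by omega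
    rw [h]

/-- Let `R` be a unital ring, `W` an `R`-module and `T : W → W` an
`R`-linear endomorphism such that `Tⁿ` is stable for some `n ≥ 1`.  Then the canonical
`R`-linear map from the projective limit `P(T)` to the inductive limit `C(T)`, sending
a sequence `x` to `ι₀ (x 0)`, is bijective. -/
theorem projLimit_to_indLimit_bijective
    (R : Type*) [Ring R] (W : Type*) [AddCommGroup W] [Module R W]
    (T : Module.End R W) (n : ℕ) (hn : 1 ≤ n)
    (hker : LinearMap.ker (T ^ n) = LinearMap.ker ((T ^ n) ∘ₗ (T ^ n)))
    (hrange : LinearMap.range (T ^ n) = LinearMap.range ((T ^ n) ∘ₗ (T ^ n))) :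
    Function.Bijective
      ((indLimit.ι R T 0) ∘ₗ (LinearMap.proj 0) ∘ₗ (projLimit T).subtype) := by
    classical
  have hmul : ∀ (a b : ℕ) (w : W), (T ^ a) ((T ^ b) w) = (T ^ (a + b)) w := by
    intro a b w
    rw [← Module.End.mul_apply, ← pow_add]
  have hnn : n - 1 + 1 = n := Nat.succ_pred_eq_of_pos hn
  have hTS : ∀ w : W, T ((T ^ n) w) = (T ^ n) (T w) := by
    intro w
    have h1 := hmul 1 n w
    have h2 := hmul n 1 w
    rw [pow_one] at h1 h2
    rw [h1, h2, add_comm]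
  have hT1S : ∀ w : W, (T ^ (n - 1)) ((T ^ n) w) = (T ^ n) ((T ^ (n - 1)) w) := by
    intro w
    have h1 := hmul (n - 1) n w
    have h2 := hmul n (n - 1) w
    rw [h1, h2, add_comm]
  have hTV : ∀ v ∈ LinearMap.range (T ^ n), T v ∈ LinearMap.range (T ^ n) := by
    rintro v ⟨w, rfl⟩
    exact ⟨T w, (hTS w).symm⟩
  have hinjV : ∀ v ∈ LinearMap.range (T ^ n), T v = 0 → v = 0 := by
    rintro v ⟨w, rfl⟩ hv
    have hSv : (T ^ n) ((T ^ n) w) = 0 := by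
      have h1 := hmul (n - 1) 1 ((T ^ n) w)
      rw [pow_one, hnn] at h1
      rw [← h1, hv, map_zero]
    have hmem : w ∈ LinearMap.ker ((T ^ n) ∘ₗ (T ^ n)) := by
      rw [LinearMap.mem_ker, LinearMap.comp_apply]
      exact hSv
    rw [← hker] at hmem
    exact hmem
  have hinjVm : ∀ m : ℕ, ∀ v ∈ LinearMap.range (T ^ n), (T ^ m) v = 0 → v = 0 := by
    intro m
    induction m with
    | zero => intro v _ h0; simpa using h0
    | succ m ih =>
      intro v hv h0
      have hTv : (T ^ m) (T v) = 0 := by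
        have h1 := hmul m 1 v
        rw [pow_one] at h1
        rw [h1]
        exact h0
      exact hinjV v hv (ih (T v) (hTV v hv) hTv)
  have hsurjV : ∀ v, v ∈ LinearMap.range (T ^ n) →
      ∃ u, u ∈ LinearMap.range (T ^ n) ∧ T u = v := by
    intro v hv
    rw [hrange] at hv
    obtain ⟨u, hu⟩ := hv
    refine ⟨(T ^ (n - 1)) ((T ^ n) u), ⟨(T ^ (n - 1)) u, (hT1S u).symm⟩, ?_⟩
    have h1 := hmul 1 (n - 1) ((T ^ n) u)
    rw [pow_one] at h1
    rw [h1, show 1 + (n - 1) = n by omega]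
    exact hu
  have hsurjVm : ∀ m : ℕ, ∀ v ∈ LinearMap.range (T ^ n),
      ∃ u, u ∈ LinearMap.range (T ^ n) ∧ (T ^ m) u = v := by
    intro m
    induction m with
    | zero => intro v hv; exact ⟨v, hv, by simp⟩
    | succ m ih =>
      intro v hv
      obtain ⟨u, hu, hTu⟩ := hsurjV v hv
      obtain ⟨u', hu', hTu'⟩ := ih u hu
      refine ⟨u', hu', ?_⟩
      have h1 := hmul 1 m u'
      rw [pow_one] at h1
      rw [show m + 1 = 1 + m by omega, ← h1, hTu', hTu]
  have hdecomp : ∀ w : W, ∃ a b : W, (T ^ n) a = 0 ∧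
      b ∈ LinearMap.range (T ^ n) ∧ w = a + b := by
    intro w
    have hv : (T ^ n) w ∈ LinearMap.range ((T ^ n) ∘ₗ (T ^ n)) := by
      rw [← hrange]; exact ⟨w, rfl⟩
    obtain ⟨u, hu⟩ := hv
    rw [LinearMap.comp_apply] at hu
    refine ⟨w - (T ^ n) u, (T ^ n) u, ?_, ⟨u, rfl⟩, by abel⟩
    rw [map_sub, hu, sub_self]
  have hchain : ∀ x, x ∈ projLimit T → ∀ k j : ℕ, (T ^ j) (x (k + j)) = x k := by
    intro x hx k j
    induction j with
    | zero => simp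
    | succ j ih =>
      have h1 := hmul j 1 (x (k + (j + 1)))
      rw [pow_one] at h1
      rw [← h1]
      have e : T (x (k + (j + 1))) = x (k + j) := hx (k + j)
      rw [e, ih]
  have hmemV : ∀ x, x ∈ projLimit T → ∀ k, x k ∈ LinearMap.range (T ^ n) :=
    fun x hx k => ⟨x (k + n), hchain x hx k n⟩
  constructor
  · rw [← LinearMap.ker_eq_bot, Submodule.eq_bot_iff]
    rintro ⟨x, hx⟩ hx0
    have h0 : Module.DirectLimit.of R ℕ (fun _ : ℕ => W) (indSys T) 0 (x 0) = 0 := hx0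
    obtain ⟨j, hj, hz⟩ := Module.DirectLimit.of.zero_exact h0
    have hz' : (T ^ (j - 0)) (x 0) = 0 := hz
    have hx00 : x 0 = 0 := hinjVm (j - 0) (x 0) (hmemV x hx 0) hz'
    apply Subtype.ext
    funext k
    have hc : (T ^ k) (x (0 + k)) = x 0 := hchain x hx 0 k
    rw [Nat.zero_add] at hc
    exact hinjVm k (x k) (hmemV x hx k) (by rw [hc, hx00])
  · intro c
    obtain ⟨k, w, hw⟩ := Module.DirectLimit.exists_of c
    obtain ⟨a, b, ha, hbV, rfl⟩ := hdecomp w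
    have hka : indLimit.ι R T k a = 0 := by
      have h1 : indLimit.ι R T (k + n) ((indSys T k (k + n) (Nat.le_add_right k n)) a)
          = indLimit.ι R T k a := Module.DirectLimit.of_f
      have h2 : (indSys T k (k + n) (Nat.le_add_right k n)) a = 0 := by
        show (T ^ (k + n - k)) a = 0
        rw [Nat.add_sub_cancel_left]
        exact ha
      rw [← h1, h2, map_zero]
    obtain ⟨b₀, hb₀V, hb₀⟩ := hsurjVm k b hbV
    choose nxt hnV hnT using hsurjV
    let y : ℕ → {v : W // v ∈ LinearMap.range (T ^ n)} :=
      fun m => Nat.rec ⟨b₀, hb₀V⟩ (fun _ p => ⟨nxt p.1 p.2, hnV p.1 p.2⟩) m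
    have hystep : ∀ m, T ((y (m + 1)).1) = (y m).1 := fun m => hnT _ _
    refine ⟨⟨fun m => (y m).1, hystep⟩, ?_⟩
    show indLimit.ι R T 0 b₀ = c
    have h3 : indLimit.ι R T k ((indSys T 0 k (Nat.zero_le k)) b₀)
        = indLimit.ι R T 0 b₀ := Module.DirectLimit.of_f
    have h4 : (indSys T 0 k (Nat.zero_le k)) b₀ = b := by
      show (T ^ (k - 0)) b₀ = b
      rw [Nat.sub_zero]
      exact hb₀
    rw [← h3, h4]
    have h5 : indLimit.ι R T k (a + b) = c := hw
    rw [map_add, hka, zero_add] at h5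
    exact h5
end

section
/- Let A be a unital ring and a ∈ A. Let T_l : A → A be left multiplication by a and T_r : A → A right multiplication by a (as additive group endomorphisms). If the canonical map P(T_l) → C(T_l) and the canonical map P(T_r) → C(T_r) are both bijective, then there exists n ∈ ℕ such that aⁿ·A = a^{n+1}·A and A·aⁿ = A·a^{n+1} (equality of right ideals and of left ideals, respectively). -/
/-!
Surjectivity of `P(T) → C(T)` says that every `b ∈ A` satisfies `ι₀ b = ι₀ (x 0)` for some
compatible sequence `x`; by exactness of the direct limit this means `T^[m] b = T^[m] (x 0) =
T^[m+1] (x 1)` for some `m`. For `T = (a * ·)` and `b = 1` this gives `a ^ m ∈ a ^ (m+1) A`,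
which makes the chain `aⁿA` stationary from `m` on; `T = (· * a)` does the same on the left.
-/

/-- The projective limit `P(T)` of the constant system
`⋯ → A --T--> A --T--> A` for an additive endomorphism `T` of `A`: the set of
sequences `x : ℕ → A` with `T (x (k+1)) = x k` for all `k`. -/
def addProjLimit {A : Type*} [AddCommGroup A] (T : AddMonoid.End A) : Type _ :=
  {x : ℕ → A // ∀ k, T (x (k + 1)) = x k}

/-- The direct system `A --T--> A --T--> A → ⋯` indexed by `ℕ` associated to an
additive endomorphism `T` of `A`: the structure map from stage `i` to stage `j ≥ i`
is `T^(j-i)`. -/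
def addIndSys {A : Type*} [AddCommGroup A] (T : AddMonoid.End A) :
    ∀ i j : ℕ, i ≤ j → ((fun _ : ℕ => A) i →+ (fun _ : ℕ => A) j) :=
  fun i j _ => (T ^ (j - i) : AddMonoid.End A)

/-- The inductive limit `C(T)` of the direct system `A --T--> A --T--> A → ⋯`,
taken in the category of abelian groups. -/
abbrev addIndLimit {A : Type*} [AddCommGroup A] (T : AddMonoid.End A) : Type _ :=
  AddCommGroup.DirectLimit (fun _ : ℕ => A) (addIndSys T)

/-- The canonical map `P(T) → C(T)`, sending `x` to `ι₀ (x 0)`, where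
`ι_k : A → C(T)` are the structure maps of the inductive limit (which satisfy
`ι_{k+1} ∘ T = ι_k`). -/
noncomputable def addCanonicalMap {A : Type*} [AddCommGroup A]
    (T : AddMonoid.End A) : addProjLimit T → addIndLimit T :=
  fun x => AddCommGroup.DirectLimit.of (fun _ : ℕ => A) (addIndSys T) 0 (x.1 0)

instance addIndSys_directedSystem {A : Type*} [AddCommGroup A] (T : AddMonoid.End A) :
    DirectedSystem (fun _ : ℕ => A) (fun i j h => addIndSys T i j h) where
  map_self i x := by
    show (T ^ (i - i)) x = x
    rw [Nat.sub_self, pow_zero, AddMonoid.End.one_apply]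
  map_map {k j i} hij hjk x := by
    show (T ^ (k - j) * T ^ (j - i)) x = (T ^ (k - i)) x
    rw [← pow_add, Nat.sub_add_sub_cancel hjk hij]

lemma exists_iterate_succ_eq_iterate_of_surjective_addCanonicalMap {A : Type*} [AddCommGroup A]
    {T : AddMonoid.End A} (h : Function.Surjective (addCanonicalMap T)) (b : A) :
    ∃ (y : A) (m : ℕ), T^[m + 1] y = T^[m] b := by
  obtain ⟨x, hx⟩ := h (AddCommGroup.DirectLimit.of (fun _ : ℕ => A) (addIndSys T) 0 b)
  have hzero : AddCommGroup.DirectLimit.of (fun _ : ℕ => A) (addIndSys T) 0 (x.1 0 - b) = 0 := by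
    rw [map_sub, sub_eq_zero]
    exact hx
  obtain ⟨m, _, hvanish⟩ := AddCommGroup.DirectLimit.of.zero_exact _ _ hzero
  have hm : T^[m] (x.1 0) = T^[m] b := by
    rw [← sub_eq_zero, ← iterate_map_sub]
    exact hvanish
  exact ⟨x.1 1, m, by rw [Function.iterate_succ_apply, x.2 0, hm]⟩

section Monoid

variable {M : Type*} [Monoid M] {a y : M} {m n : ℕ}

lemma range_pow_mul_eq_range_pow_succ_mul (h : a ^ (m + 1) * y = a ^ m) (hmn : m ≤ n) :
    Set.range (a ^ n * ·) = Set.range (a ^ (n + 1) * ·) := by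
  have hn : a ^ (n + 1) * y = a ^ n := by
    obtain ⟨k, rfl⟩ := Nat.exists_eq_add_of_le hmn
    rw [add_right_comm, add_comm, pow_add, mul_assoc, h, ← pow_add, add_comm]
  ext w
  constructor
  · rintro ⟨u, rfl⟩
    exact ⟨y * u, by simp only [← mul_assoc, hn]⟩
  · rintro ⟨u, rfl⟩
    exact ⟨a * u, by simp only [← mul_assoc, ← pow_succ]⟩

lemma range_mul_pow_eq_range_mul_pow_succ (h : y * a ^ (m + 1) = a ^ m) (hmn : m ≤ n) :
    Set.range (· * a ^ n) = Set.range (· * a ^ (n + 1)) := by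
  have hn : y * a ^ (n + 1) = a ^ n := by
    obtain ⟨k, rfl⟩ := Nat.exists_eq_add_of_le hmn
    rw [add_right_comm, pow_add, ← mul_assoc, h, ← pow_add]
  ext w
  constructor
  · rintro ⟨u, rfl⟩
    exact ⟨u * y, by simp only [mul_assoc, hn]⟩
  · rintro ⟨u, rfl⟩
    exact ⟨u * a, by simp only [mul_assoc, ← pow_succ']⟩

end Monoid

/-- Let `A` be a unital ring and `a ∈ A`.  Let `T_l` be left
multiplication by `a` and `T_r` right multiplication by `a`, as additive
endomorphisms of `A`.  If the canonical maps `P(T_l) → C(T_l)` and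
`P(T_r) → C(T_r)` are both bijective, then there exists `n ∈ ℕ` with
`aⁿ·A = a^(n+1)·A` and `A·aⁿ = A·a^(n+1)`. -/
theorem ideals_stabilize_of_limits_bijective
    (A : Type*) [Ring A] (a : A)
    (hl : Function.Bijective (addCanonicalMap (AddMonoidHom.mulLeft a : AddMonoid.End A)))
    (hr : Function.Bijective (addCanonicalMap (AddMonoidHom.mulRight a : AddMonoid.End A))) :
    ∃ n : ℕ,
      Set.range (fun x : A => a ^ n * x) = Set.range (fun x : A => a ^ (n + 1) * x) ∧
      Set.range (fun x : A => x * a ^ n) = Set.range (fun x : A => x * a ^ (n + 1)) := by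
  obtain ⟨y, m, hy⟩ := exists_iterate_succ_eq_iterate_of_surjective_addCanonicalMap hl.2 1
  obtain ⟨z, p, hz⟩ := exists_iterate_succ_eq_iterate_of_surjective_addCanonicalMap hr.2 1
  change (a * ·)^[m + 1] y = (a * ·)^[m] 1 at hy
  change (· * a)^[p + 1] z = (· * a)^[p] 1 at hz
  rw [mul_left_iterate_apply, mul_left_iterate_apply, mul_one] at hy
  rw [mul_right_iterate_apply, mul_right_iterate_apply, one_mul] at hz
  exact ⟨max m p, range_pow_mul_eq_range_pow_succ_mul hy (le_max_left m p),
    range_mul_pow_eq_range_mul_pow_succ hz (le_max_right m p)⟩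
end

section
/- Let G be a finite group and k a field whose characteristic does not divide the order of G. If f ∈ k[G] is a nilpotent element of the group algebra, then the coefficient of f at the identity element of G is zero. -/
/-! The trace of left multiplication by `f` on `k[G]`, computed in the basis `G`, is
`|G| • f(1)`: the diagonal entry at `g` is the coefficient of `f * g` at `g`, namely `f(1)`.
Left multiplication by a nilpotent `f` is a nilpotent endomorphism, so its trace is nilpotent,
hence zero in a field; since `|G|` is invertible in `k`, `f(1) = 0`. -/

namespace MonoidAlgebra

variable {k G : Type*} [CommRing k] [Group G] [Fintype G]

theorem trace_mulLeft (f : MonoidAlgebra k G) :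
    LinearMap.trace k _ (LinearMap.mulLeft k f) = Fintype.card G • f.coeff 1 := by
  classical
  have hdiag : ∀ g : G, LinearMap.toMatrix (basis G k) (basis G k) (LinearMap.mulLeft k f) g g =
      f.coeff 1 := fun g => by
    rw [LinearMap.toMatrix_apply]
    change (f * single g 1).coeff g = f.coeff 1
    rw [coeff_mul_single_apply, mul_inv_cancel, mul_one]
  rw [LinearMap.trace_eq_matrix_trace k (basis G k), Matrix.trace]
  simp only [Matrix.diag_apply, hdiag, Finset.sum_const, Finset.card_univ]

theorem isNilpotent_card_nsmul_coeff_one {f : MonoidAlgebra k G} (hf : IsNilpotent f) :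
    IsNilpotent (Fintype.card G • f.coeff 1) := by
  have : Module.Finite k (MonoidAlgebra k G) := .of_basis (basis G k)
  rw [← trace_mulLeft]
  exact LinearMap.isNilpotent_trace_of_isNilpotent (hf.map (Algebra.lmul k (MonoidAlgebra k G)))

end MonoidAlgebra

/-- Let `G` be a finite group and `k` a field whose characteristic
does not divide the order of `G`.  If `f ∈ k[G]` is a nilpotent element of the group
algebra, then the coefficient of `f` at the identity element of `G` is zero. -/
theorem coeff_one_eq_zero_of_isNilpotent
    (G : Type*) [Group G] [Fintype G] (k : Type*) [Field k]
    (hchar : ¬ (ringChar k ∣ Fintype.card G))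
    (f : MonoidAlgebra k G) (hf : IsNilpotent f) :
    f.coeff 1 = 0 := by
  have hcard : (Fintype.card G : k) ≠ 0 := fun h => hchar ((ringChar.spec k _).mp h)
  have htrace := (MonoidAlgebra.isNilpotent_card_nsmul_coeff_one hf).eq_zero
  rwa [nsmul_eq_mul, mul_eq_zero, or_iff_right hcard] at htrace
end

section
/- With L, Ū, T, U, k, [·] and S as in the context, for every t ∈ T one has t·S·t⁻¹ = S in k[L]; consequently S commutes with every element of the subalgebra of k[L] spanned by T. -/
/-!
Conjugation by `t ∈ T` permutes `U` and `Ū`, and conjugating `x·x̄ = ū·t(x,x̄)·u` shows, by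
uniqueness of the decomposition, that `t(txt⁻¹, tx̄t⁻¹) = t·t(x,x̄)·t⁻¹`. Reindexing the double
sum along these permutations gives `t·S·t⁻¹ = S`, so `S` commutes with `T` and hence with its span.
-/

open MonoidAlgebra

section

variable {L : Type*} [Group L]

theorem Subgroup.sum_conj_eq {M : Type*} [AddCommMonoid M] {H : Subgroup L} [Fintype H] {g : L}
    (hg : ∀ h ∈ H, g * h * g⁻¹ ∈ H) (f : H → M) :
    ∑ h : H, f ⟨g * h * g⁻¹, hg h h.2⟩ = ∑ h : H, f h := by
  refine Fintype.sum_bijective _ (Function.Injective.bijective_of_finite ?_) _ _ fun _ => rfl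
  intro h₁ h₂ h
  simpa using congrArg Subtype.val h

theorem middle_eq_of_mul_mul_eq {A B C : Subgroup L}
    (hinj : Function.Injective (fun p : A × B × C => (p.1 : L) * (p.2.1 : L) * (p.2.2 : L)))
    {a a' : A} {b b' : B} {c c' : C} (h : (a : L) * b * c = a' * b' * c') : b = b' :=
  congrArg (·.2.1) (@hinj (a, b, c) (a', b', c') h)

theorem coe_middle_conj {Ubar T U : Subgroup L}
    (hinj : Function.Injective
      (fun p : Ubar × T × U => (p.1 : L) * (p.2.1 : L) * (p.2.2 : L)))
    {t : L} (ht : t ∈ T) (htU : ∀ u ∈ U, t * u * t⁻¹ ∈ U)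
    (htUbar : ∀ u ∈ Ubar, t * u * t⁻¹ ∈ Ubar)
    (ub : U → Ubar → Ubar) (tm : U → Ubar → T) (uu : U → Ubar → U)
    (hdec : ∀ (x : U) (y : Ubar),
      (x : L) * (y : L) = (ub x y : L) * (tm x y : L) * (uu x y : L))
    (x : U) (y : Ubar) :
    (tm ⟨t * x * t⁻¹, htU x x.2⟩ ⟨t * y * t⁻¹, htUbar y y.2⟩ : L) = t * tm x y * t⁻¹ := by
  set x' : U := ⟨t * x * t⁻¹, htU x x.2⟩
  set y' : Ubar := ⟨t * y * t⁻¹, htUbar y y.2⟩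
  have hconj : t * tm x y * t⁻¹ ∈ T := T.mul_mem (T.mul_mem ht (tm x y).2) (T.inv_mem ht)
  have hdec_conj : (ub x' y' : L) * tm x' y' * uu x' y' =
      t * ub x y * t⁻¹ * (t * tm x y * t⁻¹) * (t * uu x y * t⁻¹) := by
    calc _ = t * x * t⁻¹ * (t * y * t⁻¹) := (hdec x' y').symm
      _ = t * (x * y) * t⁻¹ := by group
      _ = _ := by rw [hdec]; group
  exact congrArg Subtype.val (middle_eq_of_mul_mul_eq hinj (a' := ⟨_, htUbar _ (ub x y).2⟩)
    (b' := ⟨_, hconj⟩) (c' := ⟨_, htU _ (uu x y).2⟩) hdec_conj)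

end

section

variable {k L : Type*} [Semiring k] [Group L]

theorem MonoidAlgebra.commute_of_of_mul_mul_of_inv_eq {a : MonoidAlgebra k L} {g : L}
    (h : of k L g * a * of k L g⁻¹ = a) : Commute a (of k L g) := by
  calc a * of k L g = of k L g * a * (of k L g⁻¹ * of k L g) := by rw [← mul_assoc, h]
    _ = of k L g * a := by rw [← map_mul, inv_mul_cancel, map_one, mul_one]

end

theorem conj_S_eq_S_and_commute_general
    (L : Type*) [Group L]
    (Ubar T U : Subgroup L) [Fintype Ubar] [Fintype U]
    (hbij : Function.Bijective
      (fun p : Ubar × T × U => ((p.1 : L) * (p.2.1 : L) * (p.2.2 : L))))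
    (hTU : ∀ t ∈ T, ∀ u ∈ U, t * u * t⁻¹ ∈ U)
    (hTUbar : ∀ t ∈ T, ∀ u ∈ Ubar, t * u * t⁻¹ ∈ Ubar)
    (ub : U → Ubar → Ubar) (tm : U → Ubar → T) (uu : U → Ubar → U)
    (hdec : ∀ (x : U) (y : Ubar),
      (x : L) * (y : L) = (ub x y : L) * (tm x y : L) * (uu x y : L))
    (k : Type*) [CommRing k] :
    (∀ t : T, of k L (t : L) *
        (∑ x : U, ∑ y : Ubar, of k L ((tm x y : L))) *
        of k L ((t : L)⁻¹) =
        ∑ x : U, ∑ y : Ubar, of k L ((tm x y : L))) ∧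
    (∀ f ∈ Submodule.span k (⇑(of k L) '' (T : Set L)),
      Commute (∑ x : U, ∑ y : Ubar, of k L ((tm x y : L))) f) := by
  have conj_eq : ∀ t : T, of k L (t : L) *
      (∑ x : U, ∑ y : Ubar, of k L ((tm x y : L))) * of k L ((t : L)⁻¹) =
      ∑ x : U, ∑ y : Ubar, of k L ((tm x y : L)) := by
    intro t
    calc _ = ∑ x : U, ∑ y : Ubar, of k L ((t : L) * tm x y * (t : L)⁻¹) := by
          simp only [Finset.mul_sum, Finset.sum_mul, map_mul]
      _ = ∑ x : U, ∑ y : Ubar, of k L (tm ⟨t * x * (t : L)⁻¹, hTU t t.2 x x.2⟩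
            ⟨t * y * (t : L)⁻¹, hTUbar t t.2 y y.2⟩ : L) := by
          simp only [coe_middle_conj hbij.injective t.2 (hTU t t.2) (hTUbar t t.2) ub tm uu hdec]
      _ = ∑ x : U, ∑ y : Ubar, of k L (tm ⟨t * x * (t : L)⁻¹, hTU t t.2 x x.2⟩ y : L) :=
          Fintype.sum_congr _ _ fun x => Subgroup.sum_conj_eq (hTUbar t t.2)
            fun y => of k L (tm ⟨t * x * (t : L)⁻¹, hTU t t.2 x x.2⟩ y : L)
      _ = _ := Subgroup.sum_conj_eq (hTU t t.2) fun x => ∑ y : Ubar, of k L (tm x y : L)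
  refine ⟨conj_eq, Commute.span_right ?_⟩
  rintro _ ⟨g, hg, rfl⟩
  exact MonoidAlgebra.commute_of_of_mul_mul_of_inv_eq (conj_eq ⟨g, hg⟩)

/-- Let `L` be a finite group with subgroups `Ū`, `T`, `U` such that
the multiplication map `Ū × T × U → L` is bijective and `T` normalises `Ū` and `U`.
Writing `x·x̄ = ū(x,x̄)·t(x,x̄)·u(x,x̄)` for the unique decomposition and
`S := Σ_{x∈U} Σ_{x̄∈Ū} t(x,x̄) ∈ k[L]`, one has `t·S·t⁻¹ = S` for every `t ∈ T`;
consequently `S` commutes with every element of the subalgebra of `k[L]` spanned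
by `T`. -/
theorem conj_S_eq_S_and_commute
    (L : Type*) [Group L] [Fintype L]
    (Ubar T U : Subgroup L) [Fintype Ubar] [Fintype T] [Fintype U]
    (hbij : Function.Bijective
      (fun p : Ubar × T × U => ((p.1 : L) * (p.2.1 : L) * (p.2.2 : L))))
    (hTU : ∀ t ∈ T, ∀ u ∈ U, t * u * t⁻¹ ∈ U)
    (hTUbar : ∀ t ∈ T, ∀ u ∈ Ubar, t * u * t⁻¹ ∈ Ubar)
    (ub : U → Ubar → Ubar) (tm : U → Ubar → T) (uu : U → Ubar → U)
    (hdec : ∀ (x : U) (y : Ubar),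
      (x : L) * (y : L) = (ub x y : L) * (tm x y : L) * (uu x y : L))
    (k : Type*) [CommRing k] :
    (∀ t : T, of k L (t : L) *
        (∑ x : U, ∑ y : Ubar, of k L ((tm x y : L))) *
        of k L ((t : L)⁻¹) =
        ∑ x : U, ∑ y : Ubar, of k L ((tm x y : L))) ∧
    (∀ f ∈ Submodule.span k (⇑(of k L) '' (T : Set L)),
      Commute (∑ x : U, ∑ y : Ubar, of k L ((tm x y : L))) f) :=
  conj_S_eq_S_and_commute_general L Ubar T U hbij hTU hTUbar ub tm uu hdec k
end
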